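/- If C is a complete order on a finite set of n ≥ 2 vertices, then for any family of n-1 pairwise arc-disjoint directed paths from the transmitter to the receiver, exactly (n-2)(n-3)/2 arcs of C are not used by any path of the family; that is, the cardinality of the set of arcs of C not belonging to the union of the arc sets of the paths equals (n-2)(n-3)/2. -/

import Mathlib

/-! The first arcs of the `n - 1` paths are pairwise distinct arcs `(t, v)`, hence all the
arcs leaving `t`; likewise the last arcs are all the arcs entering `r`. No path uses an arc
`(a, b)` with `a ≠ t` and `b ≠ r`: for such an arc with `b` maximal, every path through `b`
leaves it by `(b, r)`, in particular the path using `(t, b)`, which by arc-disjointness is the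
path using `(a, b)`; but a path visits `b` only once. So the unused arcs are exactly the arcs
among the `n - 2` vertices other than `t` and `r`. -/

/-- The arcs of a directed path given as a list of vertices: the consecutive pairs. -/
def pathArcs {V : Type*} (l : List V) : List (V × V) := l.zip l.tail

/-- A directed path in the complete order from `t` to `r`: a nonempty list of vertices,
consecutive ones joined by an arc (`<`), starting at `t` and ending at `r`. -/
def IsTRPath {V : Type*} [LT V] (t r : V) (l : List V) : Prop :=
  l ≠ [] ∧ l.Chain' (· < ·) ∧ l.head? = some t ∧ l.getLast? = some r

/-- A family of paths is pairwise arc-disjoint: no two distinct members share an arc. -/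
def ArcDisjoint {V : Type*} {k : ℕ} (P : Fin k → List V) : Prop :=
  ∀ i j, i ≠ j → ∀ e ∈ pathArcs (P i), e ∉ pathArcs (P j)

section Lists

variable {V : Type*} {l : List V} {a b : V}

theorem mem_pathArcs_iff : (a, b) ∈ pathArcs l ↔ ∃ xs ys, l = xs ++ a :: b :: ys := by
  induction l with
  | nil => simp [pathArcs]
  | cons x l ih =>
    cases l with
    | nil =>
      simp only [pathArcs, List.tail_cons, List.zip_nil_right, List.not_mem_nil, false_iff]
      rintro ⟨xs, ys, h⟩
      have hlen := congrArg List.length h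
      simp only [List.length_nil, List.length_append, List.length_cons] at hlen
      omega
    | cons y l =>
      simp only [pathArcs, List.tail_cons, List.zip_cons_cons, List.mem_cons,
        Prod.mk.injEq] at ih ⊢
      rw [ih]
      constructor
      · rintro (⟨rfl, rfl⟩ | ⟨xs, ys, h⟩)
        · exact ⟨[], l, rfl⟩
        · exact ⟨x :: xs, ys, by rw [h]; rfl⟩
      · rintro ⟨_ | ⟨z, xs⟩, ys, h⟩
        · simp_all
        · simp only [List.cons_append, List.cons.injEq] at h
          exact Or.inr ⟨xs, ys, h.2⟩

theorem map_snd_pathArcs (l : List V) : (pathArcs l).map Prod.snd = l.tail :=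
  List.map_snd_zip (by cases l <;> simp)

theorem rel_of_mem_pathArcs {R : V → V → Prop} (h : l.IsChain R) (hab : (a, b) ∈ pathArcs l) :
    R a b := by
  obtain ⟨xs, ys, rfl⟩ := mem_pathArcs_iff.mp hab
  exact List.isChain_iff_forall_rel_of_append_cons_cons.mp h rfl

theorem exists_mem_pathArcs_of_head? (ha : l.head? = some a) (hl : l.getLast? ≠ some a) :
    ∃ b, (a, b) ∈ pathArcs l := by
  match l, ha with
  | [_], rfl => simp at hl
  | _ :: b :: ys, rfl => exact ⟨b, mem_pathArcs_iff.mpr ⟨[], ys, rfl⟩⟩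

theorem exists_mem_pathArcs_of_getLast? (hb : l.getLast? = some b) (hl : l.head? ≠ some b) :
    ∃ a, (a, b) ∈ pathArcs l := by
  obtain ⟨xs, rfl⟩ := List.getLast?_eq_some_iff.mp hb
  obtain rfl | ⟨ys, a, rfl⟩ := xs.eq_nil_or_concat'
  · simp at hl
  · exact ⟨a, mem_pathArcs_iff.mpr ⟨ys, [], by simp⟩⟩

theorem exists_mem_pathArcs_of_mem_pathArcs (hab : (a, b) ∈ pathArcs l)
    (hl : l.getLast? ≠ some b) : ∃ c, (b, c) ∈ pathArcs l := by
  obtain ⟨xs, _ | ⟨c, ys⟩, rfl⟩ := mem_pathArcs_iff.mp hab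
  · simp at hl
  · exact ⟨c, mem_pathArcs_iff.mpr ⟨xs ++ [a], ys, by simp⟩⟩

theorem eq_of_mem_pathArcs_of_mem_pathArcs (hl : l.Nodup) {a' : V} (hab : (a, b) ∈ pathArcs l)
    (ha'b : (a', b) ∈ pathArcs l) : a = a' := by
  have hsnd : ((pathArcs l).map Prod.snd).Nodup :=
    map_snd_pathArcs l ▸ hl.sublist (List.tail_sublist l)
  exact congrArg Prod.fst (List.inj_on_of_nodup_map hsnd hab ha'b rfl)

end Lists

section Families

variable {V : Type*} {k : ℕ} {P : Fin k → List V}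

theorem ArcDisjoint.eq_of_mem_pathArcs (hdisj : ArcDisjoint P) {i j : Fin k} {e : V × V}
    (hi : e ∈ pathArcs (P i)) (hj : e ∈ pathArcs (P j)) : i = j := by
  by_contra hij
  exact hdisj i j hij e hi hj

theorem ArcDisjoint.exists_mem_pathArcs_of_card_eq [Fintype V] (hdisj : ArcDisjoint P)
    (hk : Fintype.card V = k + 1) {c : V} {φ : V → V × V}
    (h : ∀ i, ∃ v ≠ c, φ v ∈ pathArcs (P i)) {v : V} (hv : v ≠ c) :
    ∃ i, φ v ∈ pathArcs (P i) := by
  classical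
  choose f hfc hf using h
  let g : Fin k → {v // v ≠ c} := fun i => ⟨f i, hfc i⟩
  have hg : g.Injective := fun i j hij => by
    have hfij : f i = f j := congrArg Subtype.val hij
    exact hdisj.eq_of_mem_pathArcs (hf i) (hfij ▸ hf j)
  have hcard : Fintype.card (Fin k) = Fintype.card {v // v ≠ c} := by
    simp [Fintype.card_subtype_compl, hk]
  have hbij : g.Bijective := (Fintype.bijective_iff_injective_and_card g).mpr ⟨hg, hcard⟩
  obtain ⟨i, hi⟩ := hbij.2 ⟨v, hv⟩
  have hfi : f i = v := congrArg Subtype.val hi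
  exact ⟨i, hfi ▸ hf i⟩

end Families

section CompleteOrder

variable {V : Type*} [LinearOrder V] {l : List V} {a b t r : V}

theorem IsTRPath.lt_of_mem_pathArcs (h : IsTRPath t r l) (hab : (a, b) ∈ pathArcs l) : a < b :=
  rel_of_mem_pathArcs h.2.1 hab

theorem IsTRPath.nodup (h : IsTRPath t r l) : l.Nodup :=
  (List.isChain_iff_pairwise.mp h.2.1).imp ne_of_lt

theorem IsTRPath.exists_mem_pathArcs_transmitter (h : IsTRPath t r l) (htr : t ≠ r) :
    ∃ b, (t, b) ∈ pathArcs l :=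
  exists_mem_pathArcs_of_head? h.2.2.1 (by simpa [h.2.2.2] using htr.symm)

theorem IsTRPath.exists_mem_pathArcs_receiver (h : IsTRPath t r l) (htr : t ≠ r) :
    ∃ a, (a, r) ∈ pathArcs l :=
  exists_mem_pathArcs_of_getLast? h.2.2.2 (by simpa [h.2.2.1] using htr)

variable {k : ℕ} {P : Fin k → List V}

theorem ArcDisjoint.exists_mem_pathArcs_transmitter [Fintype V] (hdisj : ArcDisjoint P)
    (hP : ∀ i, IsTRPath t r (P i)) (hk : Fintype.card V = k + 1) (htr : t ≠ r) (hbt : b ≠ t) :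
    ∃ i, (t, b) ∈ pathArcs (P i) := by
  refine hdisj.exists_mem_pathArcs_of_card_eq hk (φ := Prod.mk t) (fun i => ?_) hbt
  obtain ⟨b, hb⟩ := (hP i).exists_mem_pathArcs_transmitter htr
  exact ⟨b, ((hP i).lt_of_mem_pathArcs hb).ne', hb⟩

theorem ArcDisjoint.exists_mem_pathArcs_receiver [Fintype V] (hdisj : ArcDisjoint P)
    (hP : ∀ i, IsTRPath t r (P i)) (hk : Fintype.card V = k + 1) (htr : t ≠ r) (har : a ≠ r) :
    ∃ i, (a, r) ∈ pathArcs (P i) := by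
  refine hdisj.exists_mem_pathArcs_of_card_eq hk (φ := (·, r)) (fun i => ?_) har
  obtain ⟨a, ha⟩ := (hP i).exists_mem_pathArcs_receiver htr
  exact ⟨a, ((hP i).lt_of_mem_pathArcs ha).ne, ha⟩

theorem ArcDisjoint.eq_or_eq_of_mem_pathArcs [Finite V] (hdisj : ArcDisjoint P)
    (hP : ∀ i, IsTRPath t r (P i)) (ht : ∀ x, t ≤ x)
    (hcover : ∀ v ≠ t, ∃ i, (t, v) ∈ pathArcs (P i)) {i : Fin k}
    (hab : (a, b) ∈ pathArcs (P i)) : a = t ∨ b = r := by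
  -- downward induction on `b` plays the role of choosing `b` maximal
  induction b using WellFoundedGT.induction generalizing a i with
  | _ b ih =>
  rw [or_iff_not_imp_left]
  intro hat
  by_contra hbr
  have hbt : b ≠ t := ((ht a).trans_lt ((hP i).lt_of_mem_pathArcs hab)).ne'
  have hexit : ∀ {j x}, (x, b) ∈ pathArcs (P j) → (b, r) ∈ pathArcs (P j) := by
    intro j x hxb
    have hlast : (P j).getLast? ≠ some b := by simpa [(hP j).2.2.2] using Ne.symm hbr
    obtain ⟨c, hbc⟩ := exists_mem_pathArcs_of_mem_pathArcs hxb hlast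
    obtain rfl : c = r := (ih c ((hP j).lt_of_mem_pathArcs hbc) hbc).resolve_left hbt
    exact hbc
  obtain ⟨j, htb⟩ := hcover b hbt
  obtain rfl : i = j := hdisj.eq_of_mem_pathArcs (hexit hab) (hexit htb)
  exact hat (eq_of_mem_pathArcs_of_mem_pathArcs (hP i).nodup hab htb)

theorem ArcDisjoint.exists_mem_pathArcs_iff [Fintype V] (hdisj : ArcDisjoint P)
    (hP : ∀ i, IsTRPath t r (P i)) (hk : Fintype.card V = k + 1) (ht : ∀ x, t ≤ x)
    (htr : t ≠ r) : (∃ i, (a, b) ∈ pathArcs (P i)) ↔ a < b ∧ (a = t ∨ b = r) := by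
  constructor
  · rintro ⟨i, hab⟩
    have hcover : ∀ v ≠ t, ∃ i, (t, v) ∈ pathArcs (P i) :=
      fun _ ↦ hdisj.exists_mem_pathArcs_transmitter hP hk htr
    exact ⟨(hP i).lt_of_mem_pathArcs hab, hdisj.eq_or_eq_of_mem_pathArcs hP ht hcover hab⟩
  · rintro ⟨hab, rfl | rfl⟩
    · exact hdisj.exists_mem_pathArcs_transmitter hP hk htr hab.ne'
    · exact hdisj.exists_mem_pathArcs_receiver hP hk htr hab.ne

end CompleteOrder

/-- In a complete order on `n ≥ 2` vertices, for any family of `n - 1`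
pairwise arc-disjoint directed paths from the transmitter `t` to the receiver `r`,
exactly `(n-2)(n-3)/2` arcs of the complete order are not used by any path of the
family. -/
theorem complete_order_arc_disjoint_paths_unused_arcs {V : Type*} [Fintype V] [LinearOrder V]
    (n : ℕ) (hn : 2 ≤ n) (hcard : Fintype.card V = n)
    (t r : V) (ht : ∀ x : V, t ≤ x) (hr : ∀ x : V, x ≤ r)
    (P : Fin (n - 1) → List V) (hP : ∀ i, IsTRPath t r (P i)) (hdisj : ArcDisjoint P) :
    ((Finset.univ.filter (fun p : V × V => p.1 < p.2)) \
        (Finset.univ.biUnion (fun i => (pathArcs (P i)).toFinset))).card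
      = (n - 2) * (n - 3) / 2 := by
  obtain ⟨x, hxt⟩ := Fintype.exists_ne_of_one_lt_card (by omega) t
  have htr : t ≠ r := ((ht x).lt_of_ne hxt.symm |>.trans_le (hr x)).ne
  have hunused : (Finset.univ.filter (fun p : V × V => p.1 < p.2)) \
      (Finset.univ.biUnion (fun i => (pathArcs (P i)).toFinset))
        = (({t, r}ᶜ : Finset V) ×ˢ ({t, r}ᶜ : Finset V)).filter (fun p => p.1 < p.2) := by
    ext ⟨a, b⟩
    simp only [Finset.mem_sdiff, Finset.mem_filter, Finset.mem_univ, true_and,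
      Finset.mem_biUnion, List.mem_toFinset,
      hdisj.exists_mem_pathArcs_iff hP (by omega) ht htr, Finset.mem_product, Finset.mem_compl,
      Finset.mem_insert, Finset.mem_singleton]
    have hta := ht a
    have hrb := hr b
    grind
  rw [hunused, Finset.card_product_filter_lt, Finset.card_compl, Finset.card_pair htr, hcard,
    Nat.choose_two_right, Nat.sub_sub]
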